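/- A ring R is USC if and only if R is both CUSC and potent. -/

import Mathlib

/-- An element `a` of a ring is *uniquely strongly clean* if there is exactly one
idempotent `e` such that `a - e` is a unit and `a * e = e * a`. -/
def IsUSCleanElem {R : Type*} [Ring R] (a : R) : Prop :=
  ∃! e : R, IsIdempotentElem e ∧ IsUnit (a - e) ∧ a * e = e * a

/-- An element `a` of a ring is *uniquely clean* if there is exactly one
idempotent `e` such that `a - e` is a unit. -/
def IsUCleanElem {R : Type*} [Ring R] (a : R) : Prop :=
  ∃! e : R, IsIdempotentElem e ∧ IsUnit (a - e)

/-- An element `a` of a ring is *clean* if it is the sum of an idempotent and a unit. -/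
def IsCleanElem {R : Type*} [Ring R] (a : R) : Prop :=
  ∃ e : R, IsIdempotentElem e ∧ IsUnit (a - e)

/-- A ring is *CUSC* if every clean element is uniquely strongly clean. -/
def IsCUSC (R : Type*) [Ring R] : Prop := ∀ a : R, IsCleanElem a → IsUSCleanElem a

/-- A ring is *UUSC* if every unit is uniquely strongly clean. -/
def IsUUSC (R : Type*) [Ring R] : Prop := ∀ a : R, IsUnit a → IsUSCleanElem a

/-- A ring is *CUC* if every clean element is uniquely clean. -/
def IsCUC (R : Type*) [Ring R] : Prop := ∀ a : R, IsCleanElem a → IsUCleanElem a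

/-- A ring is *UUC* if every unit is uniquely clean. -/
def IsUUC (R : Type*) [Ring R] : Prop := ∀ a : R, IsUnit a → IsUCleanElem a

/-- A ring is *USC* if every element is uniquely strongly clean. -/
def IsUSCRing (R : Type*) [Ring R] : Prop := ∀ a : R, IsUSCleanElem a

/-- A ring is *uniquely clean* (UC) if every element is uniquely clean. -/
def IsUCRing (R : Type*) [Ring R] : Prop := ∀ a : R, IsUCleanElem a

/-- A ring is *clean* if every element is clean. -/
def IsCleanRing (R : Type*) [Ring R] : Prop := ∀ a : R, IsCleanElem a

/-- The Jacobson radical of a (possibly noncommutative) ring, as a two-sided ideal. -/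
abbrev jacobsonRad (R : Type*) [Ring R] : TwoSidedIdeal R := TwoSidedIdeal.jacobson ⊥

/-- The quotient ring `R / J(R)` of a ring by its Jacobson radical. -/
abbrev JacQuot (R : Type*) [Ring R] := (jacobsonRad R).ringCon.Quotient

/-- A ring is *semi-potent* if every one-sided (left or right) ideal not contained in the
Jacobson radical contains a nonzero idempotent.  Left ideals are `Ideal R`, right ideals
are `Rᵐᵒᵖ`-submodules of `R`. -/
def Semipotent (R : Type*) [Ring R] : Prop :=
  (∀ I : Ideal R, ¬ (I : Set R) ⊆ (jacobsonRad R : Set R) →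
      ∃ e ∈ I, e ≠ 0 ∧ IsIdempotentElem e) ∧
  (∀ I : Submodule Rᵐᵒᵖ R, ¬ (I : Set R) ⊆ (jacobsonRad R : Set R) →
      ∃ e ∈ I, e ≠ 0 ∧ IsIdempotentElem e)

/-- Idempotents lift modulo the Jacobson radical: for every `a` with `a - a ^ 2 ∈ J(R)`
there is an idempotent `e` with `a - e ∈ J(R)`. -/
def IdempotentsLiftJac (R : Type*) [Ring R] : Prop :=
  ∀ a : R, a - a ^ 2 ∈ jacobsonRad R → ∃ e : R, IsIdempotentElem e ∧ a - e ∈ jacobsonRad R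

/-- A ring is *potent* if it is semi-potent and idempotents lift modulo the Jacobson radical. -/
def Potent (R : Type*) [Ring R] : Prop := Semipotent R ∧ IdempotentsLiftJac R

/-!
Strongly clean rings are potent: if `a = f + u` with `f` idempotent, `u` a unit and `fu = uf`,
then `1 - f` lies in `Ra ∩ aR`, and it lifts `a` modulo `J` whenever `a - a²` lies in `J`.

Conversely, in a CUSC ring no corner `eRe` with `e ≠ 0` has an exceptional unit `v`
(`v` and `v - e` both units of `eRe`), since `v + (1 - e)` would be strongly clean both with `0`
and with `e`. As units and idempotents lift modulo `J`, the same holds in `R / J`, where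
semipotence gives every `x ≠ 0` an outer inverse `b ≠ 0`, `bxb = b`. Matrix units built from a
square-zero element yield an exceptional unit in a `2 × 2` corner, so `R / J` is reduced and its
idempotents are central; then for `e = b(a - a²)` the element `ea` is an exceptional unit of
`eRe`. Hence `R / J` is Boolean, so every `a` is congruent modulo `J` to an idempotent `e`, and
`a = (1 - e) + ((2e - 1) + (a - e))` is clean, hence uniquely strongly clean.
-/

section Jacobson

variable {R : Type*} [Ring R]

-- Jacobson's lemma, read off from `σ (a * b) = σ (b * a)` at `1` for the `ℤ`-algebra `R`.
theorem isUnit_one_sub_mul_comm {a b : R} : IsUnit (1 - a * b) ↔ IsUnit (1 - b * a) := by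
  simpa [spectrum.mem_iff] using
    (spectrum.unit_mem_mul_comm (R := ℤ) (a := a) (b := b) (r := 1)).not

theorem mem_jacobsonRad_iff {a : R} : a ∈ jacobsonRad R ↔ ∀ y, IsUnit (1 - y * a) := by
  simp only [TwoSidedIdeal.mem_jacobson_iff, TwoSidedIdeal.mem_bot, sub_eq_zero]
  constructor
  · intro h y
    obtain ⟨z, hz⟩ := h (-y)
    obtain ⟨z', hz'⟩ := h (z * y)
    have hzl : z * (1 - y * a) = 1 := (by noncomm_ring : z * (1 - y * a) = _).trans hz
    -- `z = 1 + z * y * a` is left invertible as well, hence a unit, hence so is `1 - y * a`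
    have hzl' : z' * z = 1 :=
      calc z' * z = z' * (z * y) * a + z' + z' * (z * (1 - y * a) - 1) := by noncomm_ring
        _ = 1 := by rw [hzl, hz', sub_self, mul_zero, add_zero]
    obtain ⟨u, rfl⟩ : IsUnit z := isUnit_iff_exists_and_exists.mpr ⟨⟨_, hzl⟩, ⟨z', hzl'⟩⟩
    exact (u.isUnit_units_mul _).mp (by rw [hzl]; exact isUnit_one)
  · intro h y
    obtain ⟨u, hu⟩ := h (-y)
    refine ⟨↑u⁻¹, ?_⟩
    calc ↑u⁻¹ * y * a + ↑u⁻¹ = ↑u⁻¹ * (1 - -y * a) := by noncomm_ring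
      _ = 1 := by rw [← hu, u.inv_mul]

theorem isUnit_add_of_mem_jacobsonRad {u j : R} (hu : IsUnit u) (hj : j ∈ jacobsonRad R) :
    IsUnit (u + j) := by
  obtain ⟨u, rfl⟩ := hu
  have h : ↑u + j = ↑u * (1 - -↑u⁻¹ * j) := by
    rw [neg_mul, sub_neg_eq_add, mul_add, mul_one, ← mul_assoc, u.mul_inv, one_mul]
  rw [h]
  exact u.isUnit.mul (mem_jacobsonRad_iff.mp hj _)

theorem IsIdempotentElem.eq_zero_of_mem_jacobsonRad {e : R} (he : IsIdempotentElem e)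
    (hj : e ∈ jacobsonRad R) : e = 0 := by
  have hu : IsUnit (1 - e) := by simpa using mem_jacobsonRad_iff.mp hj 1
  exact hu.mul_right_eq_zero.mp he.one_sub_mul_self

theorem exists_not_isUnit_one_sub_mul_left {a : R} (ha : a ∉ jacobsonRad R) :
    ∃ y, ¬IsUnit (1 - y * a) := by
  simpa [mem_jacobsonRad_iff] using ha

theorem exists_not_isUnit_one_sub_mul_right {a : R} (ha : a ∉ jacobsonRad R) :
    ∃ y, ¬IsUnit (1 - a * y) := by
  simpa [isUnit_one_sub_mul_comm] using exists_not_isUnit_one_sub_mul_left ha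

theorem isCleanElem_of_sub_mem_jacobsonRad {a e : R} (he : IsIdempotentElem e)
    (hae : a - e ∈ jacobsonRad R) : IsCleanElem a := by
  have hsq : (2 * e - 1) * (2 * e - 1) = 1 := by
    rw [show (2 * e - 1) * (2 * e - 1) = 4 * (e * e - e) + 1 by noncomm_ring, he.eq, sub_self,
      mul_zero, zero_add]
  refine ⟨1 - e, he.one_sub, ?_⟩
  rw [show a - (1 - e) = 2 * e - 1 + (a - e) by noncomm_ring]
  exact isUnit_add_of_mem_jacobsonRad ⟨⟨_, _, hsq, hsq⟩, rfl⟩ hae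

end Jacobson

namespace JacQuot

variable {R : Type*} [Ring R]

variable (R) in
def mk : R →+* JacQuot R := (jacobsonRad R).ringCon.mk'

theorem mk_surjective : Function.Surjective (mk R) := RingCon.mk'_surjective _

theorem mk_eq_mk_iff {a b : R} : mk R a = mk R b ↔ a - b ∈ jacobsonRad R :=
  ((jacobsonRad R).ringCon.eq).trans ((jacobsonRad R).rel_iff a b)

theorem mk_eq_zero_iff {a : R} : mk R a = 0 ↔ a ∈ jacobsonRad R := by
  simpa using mk_eq_mk_iff (b := (0 : R))

theorem isUnit_of_isUnit_mk {a : R} (ha : IsUnit (mk R a)) : IsUnit a := by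
  obtain ⟨⟨_, c, hac, hca⟩, rfl⟩ := ha
  obtain ⟨b, rfl⟩ := mk_surjective c
  have unit_of_mk_eq_one : ∀ x : R, mk R x = 1 → IsUnit x := fun x hx => by
    simpa using
      isUnit_add_of_mem_jacobsonRad isUnit_one (mk_eq_mk_iff.mp (hx.trans (map_one _).symm))
  obtain ⟨⟨d, hd⟩, -⟩ := isUnit_iff_exists_and_exists.mp
    (unit_of_mk_eq_one (a * b) (by rw [map_mul]; exact hac))
  obtain ⟨-, ⟨d', hd'⟩⟩ := isUnit_iff_exists_and_exists.mp
    (unit_of_mk_eq_one (b * a) (by rw [map_mul]; exact hca))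
  exact isUnit_iff_exists_and_exists.mpr ⟨⟨b * d, by rw [← mul_assoc, hd]⟩,
    ⟨d' * b, by rw [mul_assoc, hd']⟩⟩

theorem exists_isIdempotentElem_mk_eq (hL : IdempotentsLiftJac R) {h : JacQuot R}
    (hh : IsIdempotentElem h) : ∃ e : R, IsIdempotentElem e ∧ mk R e = h := by
  obtain ⟨a, rfl⟩ := mk_surjective h
  obtain ⟨e, he, hae⟩ := hL a (by rw [← mk_eq_zero_iff, map_sub, map_pow, sq, hh.eq, sub_self])
  exact ⟨e, he, (mk_eq_mk_iff.mpr hae).symm⟩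

end JacQuot

section StronglyClean

variable {R : Type*} [Ring R]

def IsStronglyCleanRing (R : Type*) [Ring R] : Prop :=
  ∀ a : R, ∃ e : R, IsIdempotentElem e ∧ IsUnit (a - e) ∧ a * e = e * a

theorem IsUSCRing.isStronglyCleanRing (h : IsUSCRing R) : IsStronglyCleanRing R :=
  fun a => (h a).exists

variable {x f : R} (hf : IsIdempotentElem f) (hxf : Commute x f) {U : Rˣ} (hU : ↑U = x - f)
include hf hxf hU

theorem one_sub_eq_inv_mul_one_sub_mul : 1 - f = ↑U⁻¹ * (1 - f) * x := by
  have hUf : Commute (↑U : R) (1 - f) :=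
    hU ▸ (Commute.one_right _).sub_right (hxf.sub_left (.refl f))
  calc 1 - f = ↑U⁻¹ * ((1 - f) * ↑U) := by rw [← hUf.eq, ← mul_assoc, U.inv_mul, one_mul]
    _ = ↑U⁻¹ * (1 - f) * x := by rw [hU, mul_sub, hf.one_sub_mul_self, sub_zero, mul_assoc]

theorem one_sub_eq_mul_one_sub_mul_inv : 1 - f = x * (1 - f) * ↑U⁻¹ := by
  have hUf : Commute (↑U : R) (1 - f) :=
    hU ▸ (Commute.one_right _).sub_right (hxf.sub_left (.refl f))
  calc 1 - f = (↑U * (1 - f)) * ↑U⁻¹ := by rw [hUf.eq, mul_assoc, U.mul_inv, mul_one]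
    _ = x * (1 - f) * ↑U⁻¹ := by rw [hU, sub_mul, hf.mul_one_sub_self, sub_zero]

theorem eq_inv_mul_mul_sub_one : f = ↑U⁻¹ * f * (x - 1) := by
  have hUf : Commute (↑U : R) f := hU ▸ hxf.sub_left (.refl f)
  calc f = ↑U⁻¹ * (f * ↑U) := by rw [← hUf.eq, ← mul_assoc, U.inv_mul, one_mul]
    _ = ↑U⁻¹ * f * (x - 1) := by rw [hU, mul_sub, hf.eq]; noncomm_ring

end StronglyClean

section Potent

variable {R : Type*} [Ring R]

theorem IsStronglyCleanRing.idempotentsLiftJac (h : IsStronglyCleanRing R) :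
    IdempotentsLiftJac R := by
  intro a ha
  obtain ⟨f, hf, ⟨U, hU⟩, hc⟩ := h a
  refine ⟨1 - f, hf.one_sub, ?_⟩
  have hfa : f * a = -(↑U⁻¹ * f * (a - a ^ 2)) := by
    conv_lhs => rw [eq_inv_mul_mul_sub_one hf hc hU]
    noncomm_ring
  have hfa' : (1 - f) * (1 - a) = ↑U⁻¹ * (1 - f) * (a - a ^ 2) := by
    conv_lhs => rw [one_sub_eq_inv_mul_one_sub_mul hf hc hU]
    noncomm_ring
  rw [show a - (1 - f) = f * a - (1 - f) * (1 - a) by noncomm_ring, hfa, hfa']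
  exact sub_mem (neg_mem (TwoSidedIdeal.mul_mem_left _ _ _ ha))
    (TwoSidedIdeal.mul_mem_left _ _ _ ha)

theorem IsStronglyCleanRing.semipotent (h : IsStronglyCleanRing R) : Semipotent R := by
  have one_sub_ne_zero {x f : R} (hx : ¬IsUnit (1 - x)) (hu : IsUnit (x - f)) : 1 - f ≠ 0 := by
    rintro hf
    obtain rfl : f = 1 := (sub_eq_zero.mp hf).symm
    exact hx (by simpa using hu.neg)
  constructor
  · intro I hI
    obtain ⟨a, haI, haJ⟩ := Set.not_subset.mp hI
    obtain ⟨y, hy⟩ := exists_not_isUnit_one_sub_mul_left haJ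
    obtain ⟨f, hf, ⟨U, hU⟩, hc⟩ := h (y * a)
    refine ⟨1 - f, ?_, one_sub_ne_zero hy ⟨U, hU⟩, hf.one_sub⟩
    rw [one_sub_eq_inv_mul_one_sub_mul hf hc hU, ← mul_assoc]
    exact I.mul_mem_left _ haI
  · intro I hI
    obtain ⟨a, haI, haJ⟩ := Set.not_subset.mp hI
    obtain ⟨y, hy⟩ := exists_not_isUnit_one_sub_mul_right haJ
    obtain ⟨f, hf, ⟨U, hU⟩, hc⟩ := h (a * y)
    refine ⟨1 - f, ?_, one_sub_ne_zero hy ⟨U, hU⟩, hf.one_sub⟩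
    rw [one_sub_eq_mul_one_sub_mul_inv hf hc hU, mul_assoc, mul_assoc]
    exact I.smul_mem (MulOpposite.op _) haI

theorem IsStronglyCleanRing.potent (h : IsStronglyCleanRing R) : Potent R :=
  ⟨h.semipotent, h.idempotentsLiftJac⟩

end Potent

section CornerUnits

variable {R : Type*} [Ring R]

def IsCornerUnit (e v : R) : Prop :=
  e * v = v ∧ v * e = v ∧ ∃ w, e * w = w ∧ w * e = w ∧ v * w = e ∧ w * v = e

/-- The corners `eRe`, `e ≠ 0`, have no *exceptional units*: units `v` with `v - 1` a unit too. -/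
def NoExceptionalCornerUnits (R : Type*) [Ring R] : Prop :=
  ∀ e v : R, IsIdempotentElem e → IsCornerUnit e v → IsCornerUnit e (v - e) → e = 0

variable {e v : R}

theorem IsCornerUnit.neg (h : IsCornerUnit e v) : IsCornerUnit e (-v) := by
  obtain ⟨hev, hve, w, hew, hwe, hvw, hwv⟩ := h
  exact ⟨by rw [mul_neg, hev], by rw [neg_mul, hve], -w, by rw [mul_neg, hew],
    by rw [neg_mul, hwe], by rw [neg_mul_neg, hvw], by rw [neg_mul_neg, hwv]⟩

theorem IsCornerUnit.of_mul_eq (hev : e * v = v) (hve : v * e = v) {l r : R} (hl : l * v = e)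
    (hr : v * r = e) (her : e * r = r) (hre : r * e = r) : IsCornerUnit e v := by
  have hrl : r = l * e := by rw [← hr, ← mul_assoc, hl, her]
  exact ⟨hev, hve, r, her, hre, hr, by rw [hrl, mul_assoc, hev, hl]⟩

theorem IsCornerUnit.of_commute_mul {u : R} (heu : e * u = u) (hue : u * e = u) (hev : e * v = v)
    (hc : Commute u v) (huv : IsCornerUnit e (u * v)) : IsCornerUnit e u := by
  obtain ⟨-, -, w, hew, hwe, h1, h2⟩ := huv
  exact .of_mul_eq heu hue (l := w * v) (r := v * w) (by rw [mul_assoc, ← hc.eq, h2])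
    (by rw [← mul_assoc, h1]) (by rw [← mul_assoc, hev]) (by rw [mul_assoc, hwe])

theorem isCornerUnit_iff_isUnit_add_one_sub (he : IsIdempotentElem e) (hev : e * v = v)
    (hve : v * e = v) : IsCornerUnit e v ↔ IsUnit (v + (1 - e)) := by
  constructor
  · rintro ⟨-, -, w, hew, hwe, hvw, hwv⟩
    refine isUnit_iff_exists.mpr ⟨w + (1 - e), ?_, ?_⟩
    · rw [show (v + (1 - e)) * (w + (1 - e))
          = v * w + (v - v * e) + (w - e * w) + (1 - e) - (e - e * e) by noncomm_ring,
        hvw, hve, hew, he.eq]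
      noncomm_ring
    · rw [show (w + (1 - e)) * (v + (1 - e))
          = w * v + (w - w * e) + (v - e * v) + (1 - e) - (e - e * e) by noncomm_ring,
        hwv, hwe, hev, he.eq]
      noncomm_ring
  · rintro ⟨u, hu⟩
    have hue : (↑u : R) * e = v := by rw [hu, add_mul, hve, he.one_sub_mul_self, add_zero]
    have heu : e * ↑u = v := by rw [hu, mul_add, hev, he.mul_one_sub_self, add_zero]
    have hc : Commute (↑u⁻¹ : R) e := Commute.units_inv_left (heu.trans hue.symm).symm
    refine .of_mul_eq hev hve (l := ↑u⁻¹) (r := ↑u⁻¹ * e) (by rw [← hue, ← mul_assoc, u.inv_mul,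
      one_mul]) ?_ (by rw [← mul_assoc, ← hc.eq, mul_assoc, he.eq]) (by rw [mul_assoc, he.eq])
    rw [← hue, mul_assoc, ← mul_assoc e, ← hc.eq, mul_assoc, he.eq, ← mul_assoc, u.mul_inv,
      one_mul]

theorem isCornerUnit_of_mul_self_eq_add (he : IsIdempotentElem e) (hev : e * v = v)
    (hve : v * e = v) (hvv : v * v = v + e) : IsCornerUnit e v ∧ IsCornerUnit e (v - e) := by
  have h1 : v * (v - e) = e := by rw [mul_sub, hvv, hve, add_sub_cancel_left]
  have h2 : (v - e) * v = e := by rw [sub_mul, hvv, hev, add_sub_cancel_left]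
  have hc1 : e * (v - e) = v - e := by rw [mul_sub, hev, he.eq]
  have hc2 : (v - e) * e = v - e := by rw [sub_mul, hve, he.eq]
  exact ⟨⟨hev, hve, v - e, hc1, hc2, h1, h2⟩, ⟨hc1, hc2, v, hev, hve, h2, h1⟩⟩

theorem IsCUSC.noExceptionalCornerUnits (hC : IsCUSC R) : NoExceptionalCornerUnits R := by
  intro e v he hv hve
  have hu : IsUnit (v + (1 - e)) := (isCornerUnit_iff_isUnit_add_one_sub he hv.1 hv.2.1).mp hv
  have hue : IsUnit (v + (1 - e) - e) := by
    rw [show v + (1 - e) - e = v - e + (1 - e) by abel]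
    exact (isCornerUnit_iff_isUnit_add_one_sub he hve.1 hve.2.1).mp hve
  have hc : (v + (1 - e)) * e = e * (v + (1 - e)) := by
    rw [add_mul, mul_add, hv.2.1, hv.1, he.one_sub_mul_self, he.mul_one_sub_self]
  -- `v + (1 - e)` is a unit, strongly clean both with the idempotent `0` and with `e`
  obtain ⟨f, -, huniq⟩ := hC (v + (1 - e)) ⟨0, .zero, by rwa [sub_zero]⟩
  exact (huniq e ⟨he, hue, hc⟩).trans (huniq 0 ⟨.zero, by rwa [sub_zero], by simp⟩).symm

theorem IsCornerUnit.of_mk (he : IsIdempotentElem e) (hev : e * v = v) (hve : v * e = v)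
    (h : IsCornerUnit (JacQuot.mk R e) (JacQuot.mk R v)) : IsCornerUnit e v := by
  rw [isCornerUnit_iff_isUnit_add_one_sub he hev hve]
  apply JacQuot.isUnit_of_isUnit_mk
  rw [map_add, map_sub, map_one]
  exact (isCornerUnit_iff_isUnit_add_one_sub (he.map _) h.1 h.2.1).mp h

theorem NoExceptionalCornerUnits.jacQuot (hK : NoExceptionalCornerUnits R)
    (hL : IdempotentsLiftJac R) : NoExceptionalCornerUnits (JacQuot R) := by
  intro h v hh hv hvh
  obtain ⟨e, he, rfl⟩ := JacQuot.exists_isIdempotentElem_mk_eq hL hh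
  obtain ⟨x, rfl⟩ := JacQuot.mk_surjective v
  have hmk : JacQuot.mk R (e * x * e) = JacQuot.mk R x := by rw [map_mul, map_mul, hv.1, hv.2.1]
  have hey : e * (e * x * e) = e * x * e := by rw [← mul_assoc, ← mul_assoc, he.eq]
  have hye : e * x * e * e = e * x * e := by rw [mul_assoc, he.eq]
  have h0 : e = 0 := hK e (e * x * e) he (.of_mk he hey hye (hmk ▸ hv))
    (.of_mk he (by rw [mul_sub, hey, he.eq]) (by rw [sub_mul, hye, he.eq])
      (by rwa [map_sub, hmk]))
  rw [h0, map_zero]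

end CornerUnits

section Boolean

variable {S : Type*} [Ring S]

def HasNonzeroOuterInverses (S : Type*) [Ring S] : Prop :=
  ∀ x : S, x ≠ 0 → ∃ b ≠ 0, b * x * b = b

theorem NoExceptionalCornerUnits.mul_eq_zero_of_matrixUnits (hK : NoExceptionalCornerUnits S)
    {α β : S} (hα : α * α = 0) (hβ : β * β = 0) (hαβα : α * β * α = α) (hβαβ : β * α * β = β) :
    α * β = 0 := by
  have hα' (x : S) : x * α * α = 0 := by rw [mul_assoc, hα, mul_zero]
  have hβ' (x : S) : x * β * β = 0 := by rw [mul_assoc, hβ, mul_zero]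
  -- `α`, `β` are off-diagonal matrix units; `v` is `!![0, 1; 1, 1]` in the corner `M₂`
  set e := α * β + β * α
  set v := α + β + β * α
  obtain ⟨he, hev, hve, hvv⟩ : IsIdempotentElem e ∧ e * v = v ∧ v * e = v ∧ v * v = v + e := by
    refine ⟨?_, ?_, ?_, ?_⟩ <;>
    · simp only [IsIdempotentElem, e, v, mul_add, add_mul, ← mul_assoc, hα, hβ, hα', hβ', hαβα,
        hβαβ, zero_mul]
      abel
  have h0 : e = 0 := hK e v he (isCornerUnit_of_mul_self_eq_add he hev hve hvv).1
    (isCornerUnit_of_mul_self_eq_add he hev hve hvv).2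
  calc α * β = α * β * e := by simp only [e, mul_add, ← mul_assoc, hαβα, hβ', zero_mul, add_zero]
    _ = 0 := by rw [h0, mul_zero]

theorem NoExceptionalCornerUnits.isReduced (hK : NoExceptionalCornerUnits S)
    (hO : HasNonzeroOuterInverses S) : IsReduced S := by
  refine (isReduced_iff_pow_one_lt 2 one_lt_two).mpr fun n hn => ?_
  by_contra hn0
  obtain ⟨b, hb0, hb⟩ := hO n hn0
  rw [sq] at hn
  have hn' (x : S) : x * n * n = 0 := by rw [mul_assoc, hn, mul_zero]
  have hb' (x : S) : x * b * n * b = x * b := by rw [mul_assoc, mul_assoc, ← mul_assoc b, hb]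
  -- `b - b * b * n` and `n * b * n` are off-diagonal matrix units
  have hαβ := hK.mul_eq_zero_of_matrixUnits (α := b - b * b * n) (β := n * b * n)
    (by simp only [mul_sub, sub_mul, ← mul_assoc, hb']; abel)
    (by simp only [← mul_assoc, hn', zero_mul])
    (by simp only [mul_sub, sub_mul, ← mul_assoc, hb, hn', zero_mul]; abel)
    (by simp only [mul_sub, sub_mul, ← mul_assoc, hb', hn', zero_mul]; abel)
  apply hb0
  calc b = (b - b * b * n) * (n * b * n) * b := by
        simp only [sub_mul, ← mul_assoc, hb, hn', sub_zero]
    _ = 0 := by rw [hαβ, zero_mul]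

theorem IsIdempotentElem.commute_of_isReduced [IsReduced S] {e : S} (he : IsIdempotentElem e)
    (x : S) : Commute e x := by
  have hsq (y : S) (hy : y * y = 0) : y = 0 := IsReduced.eq_zero y ⟨2, by rwa [sq]⟩
  have he' (y : S) : y * e * e = y * e := by rw [mul_assoc, he.eq]
  have h1 : e * x = e * x * e := sub_eq_zero.mp <| hsq _ <| by
    simp only [mul_sub, sub_mul, ← mul_assoc, he']; abel
  have h2 : x * e = e * x * e := sub_eq_zero.mp <| hsq _ <| by
    simp only [mul_sub, sub_mul, ← mul_assoc, he']; abel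
  exact h1.trans h2.symm

theorem commute_of_mul_mul_eq_self [IsReduced S] {b x : S} (h : b * x * b = b) : Commute b x := by
  have hbx : Commute (b * x) b :=
    IsIdempotentElem.commute_of_isReduced (by rw [IsIdempotentElem, ← mul_assoc, h]) b
  have hxb : Commute (x * b) b :=
    IsIdempotentElem.commute_of_isReduced
      (by rw [IsIdempotentElem, ← mul_assoc, mul_assoc x, mul_assoc x, h]) b
  have hxbb : x * b * b = b := by rw [hxb.eq, ← mul_assoc, h]
  calc b * x = x * b * b * x := by rw [hxbb]
    _ = x * (b * (b * x)) := by noncomm_ring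
    _ = x * b := by rw [← hbx.eq, h]

theorem NoExceptionalCornerUnits.isIdempotentElem (hK : NoExceptionalCornerUnits S)
    (hO : HasNonzeroOuterInverses S) (a : S) : IsIdempotentElem a := by
  have := hK.isReduced hO
  by_contra ha
  obtain ⟨b, hb0, hb⟩ := hO (a - a * a) (sub_ne_zero.mpr (Ne.symm ha))
  set x := a - a * a
  set e := b * x
  have he : IsIdempotentElem e := by rw [IsIdempotentElem, ← mul_assoc, hb]
  have hc (y : S) : Commute e y := he.commute_of_isReduced y
  apply hb0
  suffices e = 0 by rw [← hb, this, zero_mul]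
  -- `b` inverts `e * x = -(e * a * (e * a - e))` in `eSe`, and the two factors commute
  have hxb : x * b = e := (commute_of_mul_mul_eq_self hb).eq.symm
  have hbe : b * e = b := (hc b).eq.symm.trans hb
  have hex : IsCornerUnit e (e * x) := ⟨by rw [← mul_assoc, he.eq], by
    rw [mul_assoc, ← (hc x).eq, ← mul_assoc, he.eq], b, hb, hbe,
    by rw [mul_assoc, hxb, he.eq], by rw [← mul_assoc, hbe]⟩
  have hae : e * a * e = e * a := by rw [mul_assoc, ← (hc a).eq, ← mul_assoc, he.eq]
  have hea : e * (e * a) = e * a := by rw [← mul_assoc, he.eq]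
  have hea' : e * (e * a - e) = e * a - e := by rw [mul_sub, hea, he.eq]
  have hae' : (e * a - e) * e = e * a - e := by rw [sub_mul, hae, he.eq]
  have hprod : e * a * (e * a - e) = -(e * x) := by
    rw [mul_sub, ← mul_assoc, hae, show x = a - a * a from rfl]; noncomm_ring
  have hcomm : Commute (e * a) (e * a - e) :=
    (Commute.refl _).sub_right (hae.trans (by rw [← mul_assoc, he.eq]))
  exact hK e (e * a) he (.of_commute_mul hea hae hea' hcomm (hprod ▸ hex.neg))
    (.of_commute_mul hea' hae' hea hcomm.symm (hcomm.eq ▸ hprod ▸ hex.neg))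

end Boolean

section SemipotentQuotient

variable {R : Type*} [Ring R]

theorem Semipotent.hasNonzeroOuterInverses_jacQuot (hS : Semipotent R) :
    HasNonzeroOuterInverses (JacQuot R) := by
  intro x hx
  obtain ⟨a, rfl⟩ := JacQuot.mk_surjective x
  have haJ : ¬(Ideal.span {a} : Set R) ⊆ jacobsonRad R := fun h =>
    hx (JacQuot.mk_eq_zero_iff.mpr (h (Ideal.subset_span rfl)))
  obtain ⟨f, hfI, hf0, hf⟩ := hS.1 _ haJ
  obtain ⟨r, hr⟩ := Ideal.mem_span_singleton'.mp hfI
  have hfa : f * r * a = f := by rw [mul_assoc, hr, hf.eq]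
  refine ⟨JacQuot.mk R (f * r), fun h0 => hf0 (hf.eq_zero_of_mem_jacobsonRad ?_), by
    rw [← map_mul, ← map_mul, hfa, ← mul_assoc, hf.eq]⟩
  rw [← JacQuot.mk_eq_zero_iff, ← hfa, map_mul, h0, zero_mul]

end SemipotentQuotient

/-- Theorem 3.7: a ring is USC iff it is CUSC and potent. -/
theorem stmt_16 (R : Type*) [Ring R] :
    IsUSCRing R ↔ IsCUSC R ∧ Potent R := by
  refine ⟨fun h => ⟨fun a _ => h a, h.isStronglyCleanRing.potent⟩, fun ⟨hC, hS, hL⟩ a => hC a ?_⟩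
  have hBool : ∀ x : JacQuot R, IsIdempotentElem x :=
    (hC.noExceptionalCornerUnits.jacQuot hL).isIdempotentElem hS.hasNonzeroOuterInverses_jacQuot
  obtain ⟨e, he, hae⟩ := hL a <| by
    rw [← JacQuot.mk_eq_zero_iff, map_sub, map_pow, sq, hBool, sub_self]
  exact isCleanElem_of_sub_mem_jacobsonRad he hae
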